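/- arXiv:1605.04503 — 3 statements merged into one kernel-verified Lean document; each statement's English description precedes it below -/
import Mathlib

section
/- For all m ≥ 3, the kernel number satisfies 2·k_m = t_{m-3} + t_{m-5} + 1, i.e. k_m = (t_{m-3}+t_{m-5}+1)/2. -/
/-!
Because `k_m ≥ 1` for `m ≥ 1`, the truncated subtraction in the recurrence of `k` never
truncates, so `2 k_m - 1` satisfies the Tribonacci recurrence. So does `t_{m-3} + t_{m-5}`,
and the two sequences agree at `m = 3, 4, 5`.
-/

/-- Tribonacci numbers, index-shifted so that `trib n` represents t_{n-2}:
`trib 0 = t₋₂ = 0`, `trib 1 = t₋₁ = 1`, `trib 2 = t₀ = 1`, and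
`trib (n+3) = trib (n+2) + trib (n+1) + trib n`. -/
def trib : ℕ → ℕ
  | 0 => 0
  | 1 => 1
  | 2 => 1
  | n + 3 => trib (n + 2) + trib (n + 1) + trib n

/-- Kernel numbers: k₀ = 0, k₁ = k₂ = 1, k_m = k_{m-1} + k_{m-2} + k_{m-3} - 1 for m ≥ 3. -/
def ker : ℕ → ℕ
  | 0 => 0
  | 1 => 1
  | 2 => 1
  | n + 3 => ker (n + 2) + ker (n + 1) + ker n - 1

theorem one_le_ker : ∀ n, 1 ≤ ker (n + 1)
  | 0 | 1 => le_rfl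
  | n + 2 => by
    have h₁ : 1 ≤ ker (n + 1) := one_le_ker n
    have h₂ : 1 ≤ ker (n + 2) := one_le_ker (n + 1)
    show 1 ≤ ker (n + 2) + ker (n + 1) + ker n - 1
    omega

theorem ker_add_three_add_one (n : ℕ) :
    ker (n + 3) + 1 = ker (n + 2) + ker (n + 1) + ker n := by
  have h : 1 ≤ ker (n + 2) := one_le_ker (n + 1)
  show ker (n + 2) + ker (n + 1) + ker n - 1 + 1 = _
  omega

theorem two_mul_ker_add_three : ∀ n, 2 * ker (n + 3) = trib (n + 2) + trib n + 1
  | 0 | 1 | 2 => rfl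
  | n + 3 => by
    have h₀ : 2 * ker (n + 3) = trib (n + 2) + trib n + 1 := two_mul_ker_add_three n
    have h₁ : 2 * ker (n + 4) = trib (n + 3) + trib (n + 1) + 1 := two_mul_ker_add_three (n + 1)
    have h₂ : 2 * ker (n + 5) = trib (n + 4) + trib (n + 2) + 1 := two_mul_ker_add_three (n + 2)
    have hrec : ker (n + 6) + 1 = ker (n + 5) + ker (n + 4) + ker (n + 3) :=
      ker_add_three_add_one (n + 3)
    have ht₅ : trib (n + 5) = trib (n + 4) + trib (n + 3) + trib (n + 2) := trib.eq_4 (n + 2)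
    have ht₃ : trib (n + 3) = trib (n + 2) + trib (n + 1) + trib n := trib.eq_4 n
    show 2 * ker (n + 6) = trib (n + 5) + trib (n + 3) + 1
    omega

/-- For all m ≥ 3, 2·k_m = t_{m-3} + t_{m-5} + 1.
(Here `trib (m-1)` = t_{m-3} and `trib (m-3)` = t_{m-5}.) -/
theorem two_mul_kernel (m : ℕ) (hm : 3 ≤ m) :
    2 * ker m = trib (m - 1) + trib (m - 3) + 1 := by
  obtain ⟨n, rfl⟩ := Nat.exists_eq_add_of_le' hm
  exact two_mul_ker_add_three n
end

section
/- For all m ≥ 0, the prefix of length k_{m+5} − 2 of the word T_m T_{m+1} equals the prefix of length k_{m+5} − 2 of T_{m+2}. -/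
/-- The three-letter alphabet {a, b, c}. -/
inductive Alpha | a | b | c
  deriving DecidableEq, Repr

/-- The Tribonacci substitution σ(a) = ab, σ(b) = ac, σ(c) = a. -/
def sub : Alpha → List Alpha
  | .a => [.a, .b]
  | .b => [.a, .c]
  | .c => [.a]

/-- T_m = σ^m(a). -/
def T (m : ℕ) : List Alpha := (fun w => w.flatMap sub)^[m] [.a]

lemma T_succ_eq (n : ℕ) : T (n + 1) = (T n).flatMap sub := by
  unfold T
  rw [Function.iterate_succ_apply']

lemma T_prefix (n : ℕ) : T n <+: T (n + 1) := by
  induction n with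
  | zero => exact ⟨[.b], rfl⟩
  | succ n ih =>
    obtain ⟨t, ht⟩ := ih
    exact ⟨t.flatMap sub, by rw [T_succ_eq, T_succ_eq, ← ht, List.flatMap_append]⟩

lemma T_add3 (n : ℕ) : T (n + 3) = T (n + 2) ++ T (n + 1) ++ T n := by
  induction n with
  | zero => rfl
  | succ n ih =>
    have h4 : T (n + 4) = (T (n + 3)).flatMap sub := T_succ_eq (n + 3)
    have h2 : (T (n + 2)).flatMap sub = T (n + 3) := (T_succ_eq (n + 2)).symm
    have h1 : (T (n + 1)).flatMap sub = T (n + 2) := (T_succ_eq (n + 1)).symm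
    have h0 : (T n).flatMap sub = T (n + 1) := (T_succ_eq n).symm
    show T (n + 4) = T (n + 3) ++ T (n + 2) ++ T (n + 1)
    rw [h4, ih, List.flatMap_append, List.flatMap_append, h2, h1, h0, ← ih]

lemma T_length : ∀ n, (T n).length = trib (n + 2)
  | 0 => rfl
  | 1 => rfl
  | 2 => rfl
  | n + 3 => by
    have l2 : (T (n + 2)).length = trib (n + 4) := T_length (n + 2)
    have l1 : (T (n + 1)).length = trib (n + 3) := T_length (n + 1)
    have l0 : (T n).length = trib (n + 2) := T_length n
    show (T (n + 3)).length = trib (n + 5)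
    rw [T_add3, List.length_append, List.length_append, l2, l1, l0]
    rfl

lemma trib_pos : ∀ n, 1 ≤ trib (n + 1)
  | 0 => le_refl _
  | 1 => le_refl _
  | 2 => by simp [trib]
  | n + 3 => by
    have h := trib_pos n
    have e : trib (n + 4) = trib (n + 3) + trib (n + 2) + trib (n + 1) := rfl
    show 1 ≤ trib (n + 4)
    omega

lemma trib_mono (n : ℕ) : trib n ≤ trib (n + 1) := by
  match n with
  | 0 => simp [trib]
  | 1 => simp [trib]
  | 2 => simp [trib]
  | n + 3 =>
    have e : trib (n + 4) = trib (n + 3) + trib (n + 2) + trib (n + 1) := rfl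
    show trib (n + 3) ≤ trib (n + 4)
    omega

lemma trib_mono2 (n : ℕ) : trib n ≤ trib (n + 2) :=
  (trib_mono n).trans (trib_mono (n + 1))

lemma ker_add3 : ∀ n, ker (n + 3) = ker n + trib (n + 1)
  | 0 => rfl
  | 1 => rfl
  | 2 => rfl
  | n + 3 => by
    have h0 : ker (n + 3) = ker n + trib (n + 1) := ker_add3 n
    have h1 : ker (n + 4) = ker (n + 1) + trib (n + 2) := ker_add3 (n + 1)
    have h2 : ker (n + 5) = ker (n + 2) + trib (n + 3) := ker_add3 (n + 2)
    have p1 : 1 ≤ trib (n + 1) := trib_pos n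
    have e1 : ker (n + 6) = ker (n + 5) + ker (n + 4) + ker (n + 3) - 1 := rfl
    have e2 : ker (n + 3) = ker (n + 2) + ker (n + 1) + ker n - 1 := rfl
    have e3 : trib (n + 4) = trib (n + 3) + trib (n + 2) + trib (n + 1) := rfl
    show ker (n + 6) = ker (n + 3) + trib (n + 4)
    omega

lemma two_ker : ∀ n, 2 * ker (n + 5) = trib (n + 4) + trib (n + 2) + 1
  | 0 => rfl
  | 1 => rfl
  | 2 => rfl
  | n + 3 => by
    have ih : 2 * ker (n + 5) = trib (n + 4) + trib (n + 2) + 1 := two_ker n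
    have hk : ker (n + 8) = ker (n + 5) + trib (n + 6) := ker_add3 (n + 5)
    have e5 : trib (n + 5) = trib (n + 4) + trib (n + 3) + trib (n + 2) := rfl
    have e6 : trib (n + 6) = trib (n + 5) + trib (n + 4) + trib (n + 3) := rfl
    have e7 : trib (n + 7) = trib (n + 6) + trib (n + 5) + trib (n + 4) := rfl
    show 2 * ker (n + 8) = trib (n + 7) + trib (n + 5) + 1
    omega

lemma take_len_add {α : Type*} (l₁ l₂ : List α) (n : ℕ) :
    (l₁ ++ l₂).take (l₁.length + n) = l₁ ++ l₂.take n := by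
  rw [List.take_append]; simp

/-- The prefix of length k_{m+5} − 2 of T_m T_{m+1} equals the prefix of the same
length of T_{m+2}, for all m ≥ 0. -/
theorem prefix_TmTm1_eq_prefix_Tm2 (m : ℕ) :
    (T m ++ T (m + 1)).take (ker (m + 5) - 2) = (T (m + 2)).take (ker (m + 5) - 2) := by
  induction m using Nat.strong_induction_on with
  | _ m ih =>
  match m with
  | 0 => decide
  | 1 => decide
  | 2 => decide
  | m + 3 =>
    have IH := ih m (by omega)
    show (T (m + 3) ++ T (m + 4)).take (ker (m + 8) - 2) =
      (T (m + 5)).take (ker (m + 8) - 2)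
    set ℓ := ker (m + 5) - 2 with hℓ
    have hT3 : T (m + 3) = T (m + 2) ++ T (m + 1) ++ T m := T_add3 m
    have hT4 : T (m + 4) = T (m + 3) ++ T (m + 2) ++ T (m + 1) := T_add3 (m + 1)
    have hT5 : T (m + 5) = T (m + 4) ++ T (m + 3) ++ T (m + 2) := T_add3 (m + 2)
    -- decompositions with common prefix A = T(m+3) ++ T(m+2) ++ T(m+1)
    have e1 : T (m + 3) ++ T (m + 4) =
        (T (m + 3) ++ T (m + 2) ++ T (m + 1)) ++ (T m ++ T (m + 2) ++ T (m + 1)) := by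
      rw [hT4, hT3]
      simp [List.append_assoc]
    have e2 : T (m + 5) =
        (T (m + 3) ++ T (m + 2) ++ T (m + 1)) ++ (T (m + 3) ++ T (m + 2)) := by
      rw [hT5, hT4]
      simp [List.append_assoc]
    -- length bookkeeping
    have l0 : (T m).length = trib (m + 2) := T_length m
    have l1 : (T (m + 1)).length = trib (m + 3) := T_length (m + 1)
    have l2 : (T (m + 2)).length = trib (m + 4) := T_length (m + 2)
    have l3 : (T (m + 3)).length = trib (m + 5) := T_length (m + 3)
    have hker : ker (m + 8) = ker (m + 5) + trib (m + 6) := ker_add3 (m + 5)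
    have htrib6 : trib (m + 6) = trib (m + 5) + trib (m + 4) + trib (m + 3) := rfl
    have htrib4 : trib (m + 4) = trib (m + 3) + trib (m + 2) + trib (m + 1) := rfl
    have h2k : 2 * ker (m + 5) = trib (m + 4) + trib (m + 2) + 1 := two_ker m
    have tp : 1 ≤ trib (m + 2) := trib_pos (m + 1)
    have tm2 : trib (m + 2) ≤ trib (m + 4) := trib_mono2 (m + 2)
    have tm1 : trib (m + 1) ≤ trib (m + 3) := trib_mono2 (m + 1)
    have hkge : 2 ≤ ker (m + 5) := by omega
    have hL : ker (m + 8) - 2 = (T (m + 3) ++ T (m + 2) ++ T (m + 1)).length + ℓ := by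
      rw [List.length_append, List.length_append, l3, l2, l1]
      omega
    rw [e1, e2, hL, take_len_add, take_len_add]
    congr 1
    -- reduce to IH via prefix relations
    obtain ⟨t, ht⟩ := T_prefix (m + 1)   -- T (m+1) ++ t = T (m+2)
    obtain ⟨s, hs⟩ := T_prefix (m + 2)   -- T (m+2) ++ s = T (m+3)
    have hlen1 : ℓ ≤ (T m ++ T (m + 1)).length := by
      rw [List.length_append, l0, l1]
      omega
    have hlen2 : ℓ ≤ (T (m + 2)).length := by
      rw [l2]
      omega
    have eL : T m ++ T (m + 2) ++ T (m + 1) =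
        (T m ++ T (m + 1)) ++ (t ++ T (m + 1)) := by
      rw [← ht]; simp [List.append_assoc]
    have eR : T (m + 3) ++ T (m + 2) = T (m + 2) ++ (s ++ T (m + 2)) := by
      rw [← hs]; simp [List.append_assoc]
    rw [eL, eR, List.take_append_of_le_length hlen1, List.take_append_of_le_length hlen2]
    exact IH
end

section
/- For all m ≥ 1, P(K_m) := t_{m-1} + k_m − 1 satisfies P(K_m) = k_{m+3} − 1; that is, t_{m-1} + k_m = k_{m+3} for all m ≥ 1. -/
theorem eq_of_add_three_add_eq {u v : ℕ → ℕ} (c : ℕ)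
    (hu : ∀ n, u (n + 3) + c = u (n + 2) + u (n + 1) + u n)
    (hv : ∀ n, v (n + 3) + c = v (n + 2) + v (n + 1) + v n)
    (h₀ : u 0 = v 0) (h₁ : u 1 = v 1) (h₂ : u 2 = v 2) : u = v := by
  have key : ∀ n, u n = v n ∧ u (n + 1) = v (n + 1) ∧ u (n + 2) = v (n + 2) := by
    intro n
    induction n with
    | zero => exact ⟨h₀, h₁, h₂⟩
    | succ n ih =>
      obtain ⟨e₀, e₁, e₂⟩ := ih
      refine ⟨e₁, e₂, ?_⟩
      show u (n + 3) = v (n + 3)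
      have := hu n
      have := hv n
      omega
  exact funext fun n => (key n).1

theorem trib_add_three (n : ℕ) : trib (n + 3) = trib (n + 2) + trib (n + 1) + trib n := rfl

theorem one_le_ker_succ (n : ℕ) : 1 ≤ ker (n + 1) := by
  induction n using Nat.strong_induction_on with
  | _ n ih =>
    match n with
    | 0 | 1 => decide
    | n + 2 =>
      have : 1 ≤ ker (n + 2) := ih (n + 1) (by omega)
      have : 1 ≤ ker (n + 1) := ih n (by omega)
      show 1 ≤ ker (n + 2) + ker (n + 1) + ker n - 1
      omega

theorem trib_add_ker_general (m : ℕ) :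
    trib (m + 1) + ker m = ker (m + 3) := by
  have hu : ∀ n, (trib (n + 4) + ker (n + 3)) + 1 =
      (trib (n + 3) + ker (n + 2)) + (trib (n + 2) + ker (n + 1)) + (trib (n + 1) + ker n) := by
    intro n
    have : trib (n + 4) = trib (n + 3) + trib (n + 2) + trib (n + 1) := trib_add_three (n + 1)
    have := ker_add_three_add_one n
    omega
  have hv : ∀ n, ker (n + 6) + 1 = ker (n + 5) + ker (n + 4) + ker (n + 3) :=
    fun n => ker_add_three_add_one (n + 3)
  exact congrFun (eq_of_add_three_add_eq (u := fun m => trib (m + 1) + ker m)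
    (v := fun m => ker (m + 3)) 1 hu hv rfl rfl rfl) m

/-- For all m ≥ 1, t_{m-1} + k_m = k_{m+3}  (here `trib (m+1)` = t_{m-1}). -/
theorem trib_add_ker (m : ℕ) (hm : 1 ≤ m) :
    trib (m + 1) + ker m = ker (m + 3) :=
  trib_add_ker_general m
end
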